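/- Fixed-point characterization of the resource-bounded Until modality (correctness of the until-strategy search): Let M be an RB-CGS#, A a nonempty coalition, b a resource bound, s a state, and φ, ψ formulas of RB±ATL#. Then M, s ⊨ ⟨⟨A^b⟩⟩ φ U ψ if and only if either M, s ⊨ ψ, or M, s ⊨ φ and there exists a joint action σ_A ∈ D_A(s) such that cons(s, (σ_A)_a) ≤ b_a componentwise for every a ∈ A, out(s, σ_A) is nonempty, and for every s' ∈ out(s, σ_A), M, s' ⊨ ⟨⟨A^{b'}⟩⟩ φ U ψ, where b'_a = b_a − cons(s, (σ_A)_a) + prod(s, (σ_A)_a) for each a ∈ A. -/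

import Mathlib

/-- A resource-bounded concurrent game structure with a diminishing resource (RB-CGS#). -/
structure RBCGS (Agt S Act Res : Type) where
  /-- available actions for each agent in each state -/
  d : S → Agt → Set Act
  d_ne : ∀ s a, (d s a).Nonempty
  /-- cost function (negative = consumption, positive = production) -/
  cost : S → Act → Res → ℤ
  /-- the distinguished diminishing resource (the "first" resource) -/
  res1 : Res
  /-- every available action consumes at least one unit of the diminishing resource -/
  cost_first : ∀ s (a : Agt) (α : Act), α ∈ d s a → cost s α res1 ≤ -1
  /-- partial transition function on joint actions -/
  tr : S → (Agt → Act) → Option S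

namespace RBCGS

variable {Agt S Act Res : Type}

/-- consumption of resource ρ by action α at state s : `|min(0, c(s,α))|`. -/
def consR (M : RBCGS Agt S Act Res) (s : S) (α : Act) (ρ : Res) : ℕ :=
  (min 0 (M.cost s α ρ)).natAbs

/-- production of resource ρ by action α at state s : `max(0, c(s,α))`. -/
def prodR (M : RBCGS Agt S Act Res) (s : S) (α : Act) (ρ : Res) : ℕ :=
  (max 0 (M.cost s α ρ)).toNat

/-- σ is a (projection of a) joint action for coalition A at state s. -/
def JointAt (M : RBCGS Agt S Act Res) (A : Set Agt) (s : S) (σ : Agt → Act) : Prop :=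
  ∀ a ∈ A, σ a ∈ M.d s a

/-- outcomes of a joint action of coalition A at state s. -/
def outA (M : RBCGS Agt S Act Res) (A : Set Agt) (s : S) (σA : Agt → Act) : Set S :=
  { s' | ∃ σ : Agt → Act, (∀ a, σ a ∈ M.d s a) ∧ (∀ a ∈ A, σ a = σA a) ∧
    M.tr s σ = some s' }

variable [Inhabited S]

/-- F is a strategy for coalition A : on every nonempty history it prescribes a joint
action available to A at the last state of the history. -/
def Strategy (M : RBCGS Agt S Act Res) (A : Set Agt) (F : List S → Agt → Act) : Prop :=
  ∀ l : List S, l ≠ [] → M.JointAt A (l.getD (l.length - 1) default) (F l)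

/-- l is a (finite, nonempty) computation starting at s consistent with strategy F
(the computation `λ[1..k]` is represented 0-based as `l[0..k-1]`). -/
def ConsistentFrom (M : RBCGS Agt S Act Res) (A : Set Agt) (F : List S → Agt → Act)
    (s : S) (l : List S) : Prop :=
  l ≠ [] ∧ l.getD 0 default = s ∧
    ∀ i, i + 1 < l.length →
      l.getD (i + 1) default ∈ M.outA A (l.getD i default) (F (l.take (i + 1)))

/-- `eAvail M F b l i a ρ` is the amount `e_a(λ[i+1])` of resource ρ available to a
after i steps of l under strategy F with initial bound b. -/
def eAvail (M : RBCGS Agt S Act Res) (F : List S → Agt → Act)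
    (b : Agt → Res → ℕ) (l : List S) : ℕ → Agt → Res → ℤ
  | 0 => fun a ρ => (b a ρ : ℤ)
  | i + 1 => fun a ρ =>
      eAvail M F b l i a ρ
        - (M.consR (l.getD i default) (F (l.take (i + 1)) a) ρ : ℤ)
        + (M.prodR (l.getD i default) (F (l.take (i + 1)) a) ρ : ℤ)

/-- l is b-consistent with strategy F for coalition A. -/
def BConsistent (M : RBCGS Agt S Act Res) (A : Set Agt) (F : List S → Agt → Act)
    (b : Agt → Res → ℕ) (l : List S) : Prop :=
  ∀ a ∈ A, ∀ i, i + 1 < l.length → ∀ ρ,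
    (M.consR (l.getD i default) (F (l.take (i + 1)) a) ρ : ℤ) ≤ M.eAvail F b l i a ρ

/-- l is a b-maximal computation from s consistent with F. -/
def BMaximal (M : RBCGS Agt S Act Res) (A : Set Agt) (F : List S → Agt → Act)
    (b : Agt → Res → ℕ) (s : S) (l : List S) : Prop :=
  M.ConsistentFrom A F s l ∧ M.BConsistent A F b l ∧
    ¬ ∃ l' : List S, l <+: l' ∧ l.length < l'.length ∧
        M.ConsistentFrom A F s l' ∧ M.BConsistent A F b l'

/-- `out(s, F_A, b)` : the set of b-maximal computations from s consistent with F. -/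
def outSet (M : RBCGS Agt S Act Res) (A : Set Agt) (F : List S → Agt → Act)
    (b : Agt → Res → ℕ) (s : S) : Set (List S) :=
  { l | M.BMaximal A F b s l }

end RBCGS

/-- Formulas of RB±ATL#. -/
inductive RBForm (Agt Res P : Type) : Type 1 where
  | prop : P → RBForm Agt Res P
  | neg : RBForm Agt Res P → RBForm Agt Res P
  | or : RBForm Agt Res P → RBForm Agt Res P → RBForm Agt Res P
  | nxt : Set Agt → (Agt → Res → ℕ) → RBForm Agt Res P → RBForm Agt Res P
  | untl : Set Agt → (Agt → Res → ℕ) → RBForm Agt Res P → RBForm Agt Res P → RBForm Agt Res P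
  | rls : Set Agt → (Agt → Res → ℕ) → RBForm Agt Res P → RBForm Agt Res P → RBForm Agt Res P

namespace RBCGS

variable {Agt S Act Res P : Type} [Inhabited S]

/-- Truth of an RB±ATL# formula at a state of an RB-CGS#, given a valuation V. -/
def Sat (M : RBCGS Agt S Act Res) (V : P → S → Prop) :
    RBForm Agt Res P → S → Prop
  | .prop p, s => V p s
  | .neg φ, s => ¬ Sat M V φ s
  | .or φ ψ, s => Sat M V φ s ∨ Sat M V ψ s
  | .nxt A b φ, s => ∃ F, M.Strategy A F ∧
      ∀ l ∈ M.outSet A F b s, 2 ≤ l.length ∧ Sat M V φ (l.getD 1 default)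
  | .untl A b φ ψ, s => ∃ F, M.Strategy A F ∧
      ∀ l ∈ M.outSet A F b s, ∃ i < l.length,
        Sat M V ψ (l.getD i default) ∧ ∀ j < i, Sat M V φ (l.getD j default)
  | .rls A b φ ψ, s => ∃ F, M.Strategy A F ∧
      ∀ l ∈ M.outSet A F b s,
        (∃ i < l.length, Sat M V φ (l.getD i default) ∧
          ∀ j ≤ i, Sat M V ψ (l.getD j default)) ∨
        (∀ j < l.length, Sat M V ψ (l.getD j default))

end RBCGS

/-- All coalitions occurring in the formula are nonempty. -/
def RBForm.goodCoal {Agt Res P : Type} : RBForm Agt Res P → Prop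
  | .prop _ => True
  | .neg φ => φ.goodCoal
  | .or φ ψ => φ.goodCoal ∧ ψ.goodCoal
  | .nxt A _ φ => A.Nonempty ∧ φ.goodCoal
  | .untl A _ φ ψ => A.Nonempty ∧ φ.goodCoal ∧ ψ.goodCoal
  | .rls A _ φ ψ => A.Nonempty ∧ φ.goodCoal ∧ ψ.goodCoal

/-!
If `F` enforces `φ U ψ` from `s` and `ψ` fails at `s`, the one-state computation `[s]` must not
be `b`-maximal, so `F [s]` is affordable and has an outcome. The `b`-maximal computations from `s`
that go on to `y` are exactly `s` prepended to the `b'`-maximal computations from `y` of the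
shifted strategy `l ↦ F (s :: l)`, which gives the recursive clause; conversely, strategies for the
successors are glued behind `σ_A`. That `φ` holds at `s` needs `out(s, F, b) ≠ ∅`: every action
consumes the diminishing resource, so for `a ∈ A` a `b`-consistent computation has at most
`b_a(res1) + 1` states, and a longest one is `b`-maximal.
-/
namespace List

theorem getD_take_of_lt {α : Type*} {l : List α} {i k : ℕ} (h : i < k) (d : α) :
    (l.take k).getD i d = l.getD i d := by
  simp [getD_eq_getElem?_getD, h]

theorem getD_length_sub_one_cons {α : Type*} (x : α) {l : List α} (hl : l ≠ []) (d : α) :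
    (x :: l).getD ((x :: l).length - 1) d = l.getD (l.length - 1) d := by
  obtain ⟨n, hn⟩ := Nat.exists_eq_add_one_of_ne_zero (length_pos_iff.mpr hl).ne'
  simp [hn]

end List

namespace RBCGS

variable {Agt S Act Res : Type} {M : RBCGS Agt S Act Res}

theorem one_le_consR_res1 {s : S} {a : Agt} {α : Act} (h : α ∈ M.d s a) :
    1 ≤ M.consR s α M.res1 := by
  have := M.cost_first s a α h
  unfold consR
  omega

theorem prodR_res1 {s : S} {a : Agt} {α : Act} (h : α ∈ M.d s a) :
    M.prodR s α M.res1 = 0 := by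
  have := M.cost_first s a α h
  unfold prodR
  omega

def Affordable (M : RBCGS Agt S Act Res) (A : Set Agt) (b : Agt → Res → ℕ) (s : S)
    (σ : Agt → Act) : Prop :=
  ∀ a ∈ A, ∀ ρ, M.consR s (σ a) ρ ≤ b a ρ

def stepBound (M : RBCGS Agt S Act Res) (b : Agt → Res → ℕ) (s : S) (σ : Agt → Act) :
    Agt → Res → ℕ :=
  fun a ρ => b a ρ - M.consR s (σ a) ρ + M.prodR s (σ a) ρ

variable [Inhabited S] {A : Set Agt} {b : Agt → Res → ℕ} {s y : S} {u : List S}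
  {F : List S → Agt → Act}

variable (M) in
theorem exists_strategy (A : Set Agt) : ∃ F, M.Strategy A F :=
  ⟨fun _ a => (M.d_ne _ a).some, fun _ _ _ _ => (M.d_ne _ _).some_mem⟩

theorem Strategy.cons (hF : M.Strategy A F) (s : S) : M.Strategy A (fun l => F (s :: l)) :=
  fun l hl => by simpa only [List.getD_length_sub_one_cons s hl] using hF (s :: l) (by simp)

theorem Strategy.apply_take_mem (hF : M.Strategy A F) {a : Agt} (ha : a ∈ A) {l : List S}
    {i : ℕ} (hi : i < l.length) : F (l.take (i + 1)) a ∈ M.d (l.getD i default) a := by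
  have hlen : (l.take (i + 1)).length = i + 1 := by rw [List.length_take]; omega
  simpa only [hlen, Nat.add_sub_cancel, List.getD_take_of_lt (Nat.lt_succ_self i)] using
    hF (l.take (i + 1)) (List.ne_nil_of_length_pos (by omega)) a ha

theorem ConsistentFrom.exists_eq_cons {l : List S} (h : M.ConsistentFrom A F s l) :
    ∃ t, l = s :: t := by
  obtain ⟨hne, h0, -⟩ := h
  obtain ⟨x, t, rfl⟩ := List.exists_cons_of_ne_nil hne
  exact ⟨t, by simpa using h0⟩

theorem consistentFrom_singleton : M.ConsistentFrom A F s [s] :=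
  ⟨by simp, rfl, fun i hi => absurd hi (by simp)⟩

theorem bConsistent_singleton : M.BConsistent A F b [s] :=
  fun _ _ i hi => absurd hi (by simp)

theorem eAvail_res1_add_le (hF : M.Strategy A F) {a : Agt} (ha : a ∈ A) {l : List S}
    {i : ℕ} (hi : i ≤ l.length) : M.eAvail F b l i a M.res1 + i ≤ b a M.res1 := by
  induction i with
  | zero => simp [eAvail]
  | succ i ih =>
    have hd := hF.apply_take_mem ha (l := l) (i := i) (by omega)
    have := ih (by omega)
    have := one_le_consR_res1 hd
    simp only [eAvail, prodR_res1 hd]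
    omega

theorem length_le_of_bConsistent (hF : M.Strategy A F) {a : Agt} (ha : a ∈ A) {l : List S}
    (hb : M.BConsistent A F b l) : l.length ≤ b a M.res1 + 1 := by
  by_contra! hlen
  have := hb a ha (b a M.res1) (by omega) M.res1
  have := eAvail_res1_add_le (b := b) hF ha (l := l) (i := b a M.res1) (by omega)
  have := one_le_consR_res1 (hF.apply_take_mem ha (l := l) (i := b a M.res1) (by omega))
  omega

theorem outSet_nonempty (hF : M.Strategy A F) (hA : A.Nonempty) (b : Agt → Res → ℕ) (s : S) :
    (M.outSet A F b s).Nonempty := by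
  obtain ⟨a, ha⟩ := hA
  let C : Set (List S) := {l | M.ConsistentFrom A F s l ∧ M.BConsistent A F b l}
  have hbdd : BddAbove (List.length '' C) :=
    ⟨b a M.res1 + 1, by rintro _ ⟨l, hl, rfl⟩; exact length_le_of_bConsistent hF ha hl.2⟩
  have hs : [s] ∈ C := ⟨consistentFrom_singleton, bConsistent_singleton⟩
  obtain ⟨l, hl, hlen⟩ := Nat.sSup_mem ⟨_, Set.mem_image_of_mem List.length hs⟩ hbdd
  refine ⟨l, hl.1, hl.2, fun ⟨l', _, hlt, hl'⟩ => ?_⟩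
  exact (le_csSup hbdd ⟨l', hl', rfl⟩).not_gt (hlen ▸ hlt)

theorem eAvail_cons_succ {a : Agt} (hc : ∀ ρ, M.consR s (F [s] a) ρ ≤ b a ρ) (t : List S)
    (i : ℕ) (ρ : Res) :
    M.eAvail F b (s :: t) (i + 1) a ρ =
      M.eAvail (fun l => F (s :: l)) (M.stepBound b s (F [s])) t i a ρ := by
  induction i with
  | zero =>
    have := hc ρ
    simp only [eAvail, stepBound, List.take_succ_cons, List.take_zero, List.getD_cons_zero]
    omega
  | succ i ih => simp only [eAvail] at ih ⊢; rw [ih]; rfl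

theorem consistentFrom_cons_cons :
    M.ConsistentFrom A F s (s :: y :: u) ↔
      y ∈ M.outA A s (F [s]) ∧ M.ConsistentFrom A (fun l => F (s :: l)) y (y :: u) := by
  simp only [ConsistentFrom, ne_eq, reduceCtorEq, not_false_eq_true, List.getD_cons_zero,
    true_and, List.length_cons]
  constructor
  · intro h
    exact ⟨h 0 (by omega), fun i hi => h (i + 1) (by omega)⟩
  · rintro ⟨h0, h⟩ (_ | i) hi
    exacts [h0, h i (by omega)]

theorem bConsistent_cons_cons :
    M.BConsistent A F b (s :: y :: u) ↔
      M.Affordable A b s (F [s]) ∧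
        M.BConsistent A (fun l => F (s :: l)) (M.stepBound b s (F [s])) (y :: u) := by
  constructor
  · intro h
    have hc : M.Affordable A b s (F [s]) := fun a ha ρ =>
      Int.ofNat_le.mp (h a ha 0 (by simp) ρ)
    refine ⟨hc, fun a ha i hi ρ => ?_⟩
    rw [← eAvail_cons_succ (hc a ha)]
    exact h a ha (i + 1) (by simpa using hi) ρ
  · rintro ⟨hc, h⟩ a ha (_ | i) hi ρ
    · exact Int.ofNat_le.mpr (hc a ha ρ)
    · rw [eAvail_cons_succ (hc a ha)]
      exact h a ha i (by simpa using hi) ρ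

theorem singleton_mem_outSet :
    [s] ∈ M.outSet A F b s ↔
      ¬ (M.Affordable A b s (F [s]) ∧ (M.outA A s (F [s])).Nonempty) := by
  simp only [outSet, Set.mem_ofPred_eq, BMaximal, consistentFrom_singleton,
    bConsistent_singleton, true_and]
  refine not_congr ⟨?_, ?_⟩
  · rintro ⟨_, ⟨v, rfl⟩, hlen, hC, hB⟩
    obtain ⟨y, u, rfl⟩ := List.exists_cons_of_ne_nil (l := v) (by rintro rfl; simp at hlen)
    exact ⟨(bConsistent_cons_cons.1 hB).1, y, (consistentFrom_cons_cons.1 hC).1⟩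
  · rintro ⟨hc, y, hy⟩
    exact ⟨[s, y], ⟨[y], rfl⟩, by simp, consistentFrom_cons_cons.2 ⟨hy, consistentFrom_singleton⟩,
      bConsistent_cons_cons.2 ⟨hc, bConsistent_singleton⟩⟩

theorem mem_outSet_cons_cons {σ : Agt → Act} (hσ : F [s] = σ) (hc : M.Affordable A b s σ) :
    s :: y :: u ∈ M.outSet A F b s ↔
      y ∈ M.outA A s σ ∧
        y :: u ∈ M.outSet A (fun l => F (s :: l)) (M.stepBound b s σ) y := by
  subst hσ
  constructor
  · rintro ⟨hC, hB, hmax⟩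
    obtain ⟨hy, hC'⟩ := consistentFrom_cons_cons.1 hC
    refine ⟨hy, hC', (bConsistent_cons_cons.1 hB).2, ?_⟩
    rintro ⟨_, ⟨v, rfl⟩, hlen, hCv, hBv⟩
    exact hmax ⟨s :: y :: (u ++ v), ⟨v, rfl⟩, by simpa using hlen,
      consistentFrom_cons_cons.2 ⟨hy, hCv⟩, bConsistent_cons_cons.2 ⟨hc, hBv⟩⟩
  · rintro ⟨hy, hC, hB, hmax⟩
    refine ⟨consistentFrom_cons_cons.2 ⟨hy, hC⟩, bConsistent_cons_cons.2 ⟨hc, hB⟩, ?_⟩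
    rintro ⟨_, ⟨v, rfl⟩, hlen, hCv, hBv⟩
    exact hmax ⟨y :: (u ++ v), ⟨v, rfl⟩, by simpa using hlen,
      (consistentFrom_cons_cons.1 hCv).2, (bConsistent_cons_cons.1 hBv).2⟩

section Congr

variable {F₁ F₂ : List S → Agt → Act}

theorem consistentFrom_congr (h : ∀ t, F₁ (s :: t) = F₂ (s :: t)) {l : List S} :
    M.ConsistentFrom A F₁ s l ↔ M.ConsistentFrom A F₂ s l := by
  rcases l with _ | ⟨x, t⟩
  · simp [ConsistentFrom]
  · by_cases hx : x = s
    · subst hx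
      simp only [ConsistentFrom, List.take_succ_cons, h]
    · simp [ConsistentFrom, hx]

theorem bConsistent_cons_congr (h : ∀ t, F₁ (s :: t) = F₂ (s :: t)) {t : List S} :
    M.BConsistent A F₁ b (s :: t) ↔ M.BConsistent A F₂ b (s :: t) := by
  have he : ∀ i, M.eAvail F₁ b (s :: t) i = M.eAvail F₂ b (s :: t) i := by
    intro i
    induction i with
    | zero => rfl
    | succ i ih => simp only [eAvail, ih, List.take_succ_cons, h]
  simp only [BConsistent, he, List.take_succ_cons, h]

theorem outSet_congr (h : ∀ t, F₁ (s :: t) = F₂ (s :: t)) :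
    M.outSet A F₁ b s = M.outSet A F₂ b s := by
  suffices key : ∀ {G₁ G₂ : List S → Agt → Act}, (∀ t, G₁ (s :: t) = G₂ (s :: t)) →
      M.outSet A G₁ b s ⊆ M.outSet A G₂ b s from
    (key h).antisymm (key fun t => (h t).symm)
  intro G₁ G₂ hG l ⟨hC, hB, hmax⟩
  obtain ⟨t, rfl⟩ := hC.exists_eq_cons
  refine ⟨(consistentFrom_congr hG).1 hC, (bConsistent_cons_congr hG).1 hB, ?_⟩
  rintro ⟨l', hpre, hlen, hC', hB'⟩
  obtain ⟨t', rfl⟩ := hC'.exists_eq_cons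
  exact hmax ⟨_, hpre, hlen, (consistentFrom_congr hG).2 hC', (bConsistent_cons_congr hG).2 hB'⟩

end Congr

def HoldsUntil (p q : S → Prop) (l : List S) : Prop :=
  ∃ i < l.length, q (l.getD i default) ∧ ∀ j < i, p (l.getD j default)

theorem not_holdsUntil_nil {p q : S → Prop} : ¬ HoldsUntil p q [] := by
  simp [HoldsUntil]

theorem holdsUntil_cons {p q : S → Prop} {x : S} {l : List S} :
    HoldsUntil p q (x :: l) ↔ q x ∨ p x ∧ HoldsUntil p q l := by
  constructor
  · rintro ⟨_ | i, hi, hq, hp⟩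
    · exact .inl hq
    · exact .inr ⟨hp 0 (by omega), i, by simpa using hi, hq, fun j hj => hp (j + 1) (by omega)⟩
  · rintro (hq | ⟨hp, i, hi, hq, hp'⟩)
    · exact ⟨0, by simp, hq, by simp⟩
    · refine ⟨i + 1, by simpa using hi, hq, fun j hj => ?_⟩
      cases j with
      | zero => exact hp
      | succ j => exact hp' j (by omega)

def EnforcesUntil (M : RBCGS Agt S Act Res) (A : Set Agt) (b : Agt → Res → ℕ)
    (p q : S → Prop) (s : S) : Prop :=
  ∃ F, M.Strategy A F ∧ ∀ l ∈ M.outSet A F b s, HoldsUntil p q l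

/-- The values on histories not starting at `s` only serve to make this a strategy. -/
def thenFollow [DecidableEq S] (s : S) (σ : Agt → Act) (G : S → List S → Agt → Act) :
    List S → Agt → Act
  | [] => σ
  | [x] => if x = s then σ else G x [x]
  | _ :: y :: l => G y (y :: l)

theorem strategy_thenFollow [DecidableEq S] {σ : Agt → Act} {G : S → List S → Agt → Act}
    (hσ : M.JointAt A s σ) (hG : ∀ y, M.Strategy A (G y)) :
    M.Strategy A (thenFollow s σ G) := by
  rintro (_ | ⟨x, _ | ⟨y, l⟩⟩) hne
  · exact absurd rfl hne
  · by_cases hx : x = s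
    · subst hx
      simpa [thenFollow] using hσ
    · simpa [thenFollow, hx] using hG x [x] (by simp)
  · rw [List.getD_length_sub_one_cons x (List.cons_ne_nil y l)]
    exact hG y (y :: l) (List.cons_ne_nil y l)

variable {p q : S → Prop}

theorem enforcesUntil_of_holds (hq : q s) : M.EnforcesUntil A b p q s := by
  obtain ⟨F, hF⟩ := M.exists_strategy A
  refine ⟨F, hF, fun l hl => ?_⟩
  obtain ⟨t, rfl⟩ := hl.1.exists_eq_cons
  exact holdsUntil_cons.2 (.inl hq)

theorem enforcesUntil_of_step {σ : Agt → Act} (hp : p s) (hσ : M.JointAt A s σ)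
    (hc : M.Affordable A b s σ) (hne : (M.outA A s σ).Nonempty)
    (hrec : ∀ s' ∈ M.outA A s σ, M.EnforcesUntil A (M.stepBound b s σ) p q s') :
    M.EnforcesUntil A b p q s := by
  classical
  have hG : ∀ s', ∃ G, M.Strategy A G ∧ (s' ∈ M.outA A s σ →
      ∀ l ∈ M.outSet A G (M.stepBound b s σ) s', HoldsUntil p q l) := by
    intro s'
    by_cases hs' : s' ∈ M.outA A s σ
    · obtain ⟨G, hG, hl⟩ := hrec s' hs'
      exact ⟨G, hG, fun _ => hl⟩
    · obtain ⟨G, hG⟩ := M.exists_strategy A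
      exact ⟨G, hG, fun h => absurd h hs'⟩
  choose G hGs hGout using hG
  have hfirst : thenFollow s σ G [s] = σ := by simp [thenFollow]
  refine ⟨thenFollow s σ G, strategy_thenFollow hσ hGs, fun l hl => ?_⟩
  obtain ⟨t, rfl⟩ := hl.1.exists_eq_cons
  rcases t with _ | ⟨y, u⟩
  · rw [singleton_mem_outSet, hfirst] at hl
    exact absurd ⟨hc, hne⟩ hl
  · obtain ⟨hy, hu⟩ := (mem_outSet_cons_cons hfirst hc).1 hl
    rw [outSet_congr (F₁ := fun l => thenFollow s σ G (s :: l)) (F₂ := G y) fun _ => rfl] at hu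
    exact holdsUntil_cons.2 (.inr ⟨hp, hGout y hy _ hu⟩)

theorem step_of_enforcesUntil (hA : A.Nonempty) (h : M.EnforcesUntil A b p q s) (hq : ¬ q s) :
    p s ∧ ∃ σ, M.JointAt A s σ ∧ M.Affordable A b s σ ∧ (M.outA A s σ).Nonempty ∧
      ∀ s' ∈ M.outA A s σ, M.EnforcesUntil A (M.stepBound b s σ) p q s' := by
  obtain ⟨F, hF, hout⟩ := h
  have hnext : ∀ t, s :: t ∈ M.outSet A F b s → p s ∧ HoldsUntil p q t :=
    fun t ht => (holdsUntil_cons.1 (hout _ ht)).resolve_left hq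
  have hstep : M.Affordable A b s (F [s]) ∧ (M.outA A s (F [s])).Nonempty := by
    by_contra hstuck
    exact not_holdsUntil_nil (hnext [] (singleton_mem_outSet.2 hstuck)).2
  obtain ⟨l, hl⟩ := outSet_nonempty hF hA b s
  obtain ⟨t, rfl⟩ := hl.1.exists_eq_cons
  refine ⟨(hnext t hl).1, F [s], hF [s] (List.cons_ne_nil s []), hstep.1, hstep.2,
    fun s' hs' => ⟨_, hF.cons s, fun t ht => ?_⟩⟩
  obtain ⟨u, rfl⟩ := ht.1.exists_eq_cons
  exact (hnext _ ((mem_outSet_cons_cons rfl hstep.1).2 ⟨hs', ht⟩)).2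

theorem enforcesUntil_iff (hA : A.Nonempty) :
    M.EnforcesUntil A b p q s ↔
      q s ∨ p s ∧ ∃ σ, M.JointAt A s σ ∧ M.Affordable A b s σ ∧ (M.outA A s σ).Nonempty ∧
        ∀ s' ∈ M.outA A s σ, M.EnforcesUntil A (M.stepBound b s σ) p q s' := by
  refine ⟨fun h => or_iff_not_imp_left.2 (step_of_enforcesUntil hA h), ?_⟩
  rintro (hq | ⟨hp, σ, hσ, hc, hne, hrec⟩)
  exacts [enforcesUntil_of_holds hq, enforcesUntil_of_step hp hσ hc hne hrec]

end RBCGS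

/-- Fixed-point characterization of the resource-bounded Until modality
(correctness of the until-strategy search). -/
theorem until_fixed_point {Agt S Act Res P : Type} [Inhabited S]
    (M : RBCGS Agt S Act Res) (V : P → S → Prop)
    (A : Set Agt) (hA : A.Nonempty) (b : Agt → Res → ℕ) (s : S)
    (φ ψ : RBForm Agt Res P) :
    M.Sat V (.untl A b φ ψ) s ↔
      M.Sat V ψ s ∨
        (M.Sat V φ s ∧
          ∃ σA : Agt → Act, (∀ a ∈ A, σA a ∈ M.d s a) ∧
            (∀ a ∈ A, ∀ ρ : Res, M.consR s (σA a) ρ ≤ b a ρ) ∧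
            (M.outA A s σA).Nonempty ∧
            ∀ s' ∈ M.outA A s σA,
              M.Sat V
                (.untl A (fun a ρ => b a ρ - M.consR s (σA a) ρ + M.prodR s (σA a) ρ) φ ψ)
                s') :=
  M.enforcesUntil_iff (p := M.Sat V φ) (q := M.Sat V ψ) hA
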